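/- arXiv:2502.08827 — 9 statements merged into one kernel-verified Lean document; each statement's English description precedes it below -/
import Mathlib

section
/- If a hypergraph is laminar (i.e., any two hyperedges are either disjoint or one is contained in the other), then its vertices can be linearly ordered so that every hyperedge consists of consecutive vertices in that order; that is, every laminar hypergraph is a subpath hypergraph. -/
/-!
Choose an edge `e` of maximum size. By laminarity every other edge lies inside `e` or is disjoint
from it, so ordering the vertices of `e` recursively and then, after them, the vertices outside `e`
recursively makes every edge a block of consecutive vertices.
-/

namespace List

variable {α : Type*} [DecidableEq α]

theorem idxOf_append_lt_length_iff {l₁ l₂ : List α} {a : α} :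
    (l₁ ++ l₂).idxOf a < l₁.length ↔ a ∈ l₁ := by
  rw [idxOf_append]
  split_ifs with h <;> simp [idxOf_lt_length_iff, h]

theorem Nodup.mem_of_idxOf_le_of_idxOf_le {l m : List α} {a b c : α} (hl : l.Nodup)
    (hm : m <:+: l) (ha : a ∈ m) (hc : c ∈ m) (hab : l.idxOf a ≤ l.idxOf b)
    (hbc : l.idxOf b ≤ l.idxOf c) : b ∈ m := by
  obtain ⟨l₁, l₃, rfl⟩ := hm
  have hdisj : ∀ x ∈ m, x ∉ l₁ := fun x hx hx₁ =>
    (nodup_append.1 (nodup_append.1 hl).1).2.2 x hx₁ x hx rfl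
  have hlt_left : ∀ x, (l₁ ++ m ++ l₃).idxOf x < l₁.length ↔ x ∈ l₁ := fun x => by
    rw [append_assoc]
    exact idxOf_append_lt_length_iff
  have hlt_mid : ∀ x, (l₁ ++ m ++ l₃).idxOf x < (l₁ ++ m).length ↔ x ∈ l₁ ++ m :=
    fun _ => idxOf_append_lt_length_iff
  have hb₁ : b ∉ l₁ := fun hb => hdisj a ha ((hlt_left a).1 (hab.trans_lt ((hlt_left b).2 hb)))
  have hb₂ : b ∈ l₁ ++ m := (hlt_mid b).1 (hbc.trans_lt ((hlt_mid c).2 (mem_append_right _ hc)))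
  simpa [hb₁] using hb₂

end List

open Finset

section Laminar

variable {α : Type*} [DecidableEq α]

def IsLaminar (E : Finset (Finset α)) : Prop :=
  ∀ e₁ ∈ E, ∀ e₂ ∈ E, e₁ ∩ e₂ = ∅ ∨ e₁ ⊆ e₂ ∨ e₂ ⊆ e₁

theorem IsLaminar.subset {E F : Finset (Finset α)} (hE : IsLaminar E) (hFE : F ⊆ E) :
    IsLaminar F :=
  fun e₁ h₁ e₂ h₂ => hE e₁ (hFE h₁) e₂ (hFE h₂)

theorem IsLaminar.subset_or_disjoint_of_card_le {E : Finset (Finset α)} {e e' : Finset α}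
    (hE : IsLaminar E) (he : e ∈ E) (hmax : ∀ x ∈ E, x.card ≤ e.card) (he' : e' ∈ E) :
    e' ⊆ e ∨ Disjoint e' e := by
  rcases hE e' he' e he with h | h | h
  · exact Or.inr (disjoint_iff_inter_eq_empty.2 h)
  · exact Or.inl h
  · exact Or.inl (eq_of_subset_of_card_le h (hmax e' he')).ge

def IsContiguousIn (s : Finset α) (l : List α) : Prop :=
  ∃ m, m <:+: l ∧ m.toFinset = s

theorem IsContiguousIn.append_right {s : Finset α} {l₁ : List α} (h : IsContiguousIn s l₁)
    (l₂ : List α) : IsContiguousIn s (l₁ ++ l₂) :=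
  let ⟨m, hm, hs⟩ := h
  ⟨m, hm.trans (List.prefix_append l₁ l₂).isInfix, hs⟩

theorem IsContiguousIn.append_left {s : Finset α} {l₂ : List α} (h : IsContiguousIn s l₂)
    (l₁ : List α) : IsContiguousIn s (l₁ ++ l₂) :=
  let ⟨m, hm, hs⟩ := h
  ⟨m, hm.trans (List.suffix_append l₁ l₂).isInfix, hs⟩

theorem exists_nodup_list_contiguous_of_isLaminar (S : Finset α) (E : Finset (Finset α))
    (hES : ∀ e ∈ E, e ⊆ S) (hE : IsLaminar E) :
    ∃ l : List α, l.Nodup ∧ l.toFinset = S ∧ ∀ e ∈ E, IsContiguousIn e l := by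
  induction E using Finset.strongInduction generalizing S with
  | H E ih =>
  rcases E.eq_empty_or_nonempty with rfl | hne
  · exact ⟨S.toList, S.nodup_toList, S.toList_toFinset, by simp⟩
  obtain ⟨e, he, hmax⟩ := E.exists_max_image card hne
  have hrest : E.erase e ⊂ E := erase_ssubset he
  obtain ⟨l₁, hnd₁, hl₁, hE₁⟩ := ih ((E.erase e).filter (· ⊆ e))
    ((filter_subset _ _).trans_ssubset hrest) e (fun _ h => (mem_filter.1 h).2)
    (hE.subset ((filter_subset _ _).trans hrest.subset))
  obtain ⟨l₂, hnd₂, hl₂, hE₂⟩ := ih ((E.erase e).filter (Disjoint · e))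
    ((filter_subset _ _).trans_ssubset hrest) (S \ e)
    (fun x h => subset_sdiff.2
      ⟨hES x (mem_of_mem_erase (mem_filter.1 h).1), (mem_filter.1 h).2⟩)
    (hE.subset ((filter_subset _ _).trans hrest.subset))
  refine ⟨l₁ ++ l₂, ?_, ?_, fun x hx => ?_⟩
  · refine List.nodup_append.2 ⟨hnd₁, hnd₂, fun a ha b hb hab => ?_⟩
    rw [← List.mem_toFinset, hl₁] at ha
    rw [← List.mem_toFinset, hl₂, ← hab] at hb
    exact (mem_sdiff.1 hb).2 ha
  · rw [List.toFinset_append, hl₁, hl₂, union_sdiff_of_subset (hES e he)]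
  · by_cases hxe : x = e
    · exact ⟨l₁, (List.prefix_append l₁ l₂).isInfix, hxe ▸ hl₁⟩
    rcases hE.subset_or_disjoint_of_card_le he hmax hx with h | h
    · exact (hE₁ x (mem_filter.2 ⟨mem_erase.2 ⟨hxe, hx⟩, h⟩)).append_right l₂
    · exact (hE₂ x (mem_filter.2 ⟨mem_erase.2 ⟨hxe, hx⟩, h⟩)).append_left l₁

end Laminar

/-- Every laminar hypergraph is a subpath hypergraph: the vertices can be
linearly ordered so that every hyperedge consists of consecutive vertices. -/
theorem laminar_is_subpath {V : Type*} [Fintype V] [DecidableEq V]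
    (E : Finset (Finset V))
    (hlam : ∀ e1 ∈ E, ∀ e2 ∈ E, e1 ∩ e2 = ∅ ∨ e1 ⊆ e2 ∨ e2 ⊆ e1) :
    ∃ π : V ≃ Fin (Fintype.card V),
      ∀ e ∈ E, ∀ v ∈ e, ∀ w ∈ e, ∀ u : V,
        (π v : ℕ) ≤ (π u : ℕ) → (π u : ℕ) ≤ (π w : ℕ) → u ∈ e := by
  obtain ⟨l, hnd, hl, hE⟩ :=
    exists_nodup_list_contiguous_of_isLaminar univ E (fun _ _ => subset_univ _) hlam
  have hmem : ∀ v, v ∈ l := fun v => by simp [← List.mem_toFinset, hl]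
  let g := hnd.getEquivOfForallMemList l hmem
  have hlen : l.length = Fintype.card V := by simpa using Fintype.card_congr g
  refine ⟨g.symm.trans (finCongr hlen), fun e he v hv w hw u hvu huw => ?_⟩
  obtain ⟨m, hm, rfl⟩ := hE e he
  -- `(π v : ℕ)` unfolds to the position `l.idxOf v`.
  simp only [List.mem_toFinset] at hv hw ⊢
  exact hnd.mem_of_idxOf_le_of_idxOf_le hm hv hw hvu huw
end

section
/- Let M be a b-matching in a hypergraph, let f be a hyperedge not dominated by M at any of its vertices, and let Y be a family of pairwise disjoint hyperedges of M ∪ {f}, each a subset of f, such that Y contains, for every vertex v oversaturated in M ∪ {f}, a hyperedge incident to v. Then (M ∪ {f}) \ Y is a b-matching, and for every vertex v that is saturated in M, v is saturated in (M ∪ {f}) \ Y and the worst hyperedge incident to v in (M ∪ {f}) \ Y is weakly preferred by v to the worst hyperedge incident to v in M. -/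
/-- `e` is a worst hyperedge incident to `v` within the family `A`
(with respect to the strict preference `pref v`). -/
def IsWorstEdge {V : Type*} (pref : V → Finset V → Finset V → Prop)
    (A : Finset (Finset V)) (v : V) (e : Finset V) : Prop :=
  e ∈ A ∧ v ∈ e ∧ ∀ e' ∈ A, v ∈ e' → e' = e ∨ pref v e' e

/-- removing a suitable family `Y` from `M ∪ {f}` yields a `b`-matching in
which every vertex saturated in `M` stays saturated, with a weakly better worst edge. -/
theorem bmatching_removal_step {V : Type*} [DecidableEq V]
    (E : Finset (Finset V)) (b : V → ℕ)
    (pref : V → Finset V → Finset V → Prop)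
    (hirr : ∀ v e, ¬ pref v e e)
    (htrans : ∀ v, Transitive (pref v))
    (htotal : ∀ v, ∀ e1 ∈ E, ∀ e2 ∈ E, v ∈ e1 → v ∈ e2 → e1 ≠ e2 →
      pref v e1 e2 ∨ pref v e2 e1)
    (M : Finset (Finset V)) (hME : M ⊆ E)
    (hMb : ∀ v, (M.filter (fun e => v ∈ e)).card ≤ b v)
    (f : Finset V) (hfE : f ∈ E) (hfM : f ∉ M)
    -- f is not dominated by M at any of its vertices:
    (hfdom : ∀ v ∈ f, ¬ ((M.filter (fun e => v ∈ e)).card = b v ∧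
        ∀ e ∈ M, v ∈ e → pref v e f))
    (Y : Finset (Finset V)) (hYN : Y ⊆ insert f M)
    (hYf : ∀ e ∈ Y, e ⊆ f)
    (hYdisj : ∀ e1 ∈ Y, ∀ e2 ∈ Y, e1 ≠ e2 → e1 ∩ e2 = ∅)
    -- Y covers every vertex oversaturated in M ∪ {f}:
    (hYcov : ∀ v : V, b v < ((insert f M).filter (fun e => v ∈ e)).card →
        ∃ e ∈ Y, v ∈ e) :
    (∀ v, (((insert f M) \ Y).filter (fun e => v ∈ e)).card ≤ b v) ∧
    (∀ v, (M.filter (fun e => v ∈ e)).card = b v →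
      (((insert f M) \ Y).filter (fun e => v ∈ e)).card = b v ∧
      ∀ w1 w2 : Finset V, IsWorstEdge pref ((insert f M) \ Y) v w1 →
        IsWorstEdge pref M v w2 → w1 = w2 ∨ pref v w1 w2) := by
  classical
  have hsd : ∀ v : V, ((insert f M \ Y).filter (fun e => v ∈ e))
      = (insert f M).filter (fun e => v ∈ e) \ Y := by
    intro v; ext x
    simp only [Finset.mem_filter, Finset.mem_sdiff]
    tauto
  have hcard : ∀ v : V, ((insert f M \ Y).filter (fun e => v ∈ e)).card
      = ((insert f M).filter (fun e => v ∈ e)).card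
        - (((insert f M).filter (fun e => v ∈ e)) ∩ Y).card := by
    intro v
    rw [hsd v, ← Finset.sdiff_inter_self_left,
      Finset.card_sdiff_of_subset Finset.inter_subset_left]
  have hIt1 : ∀ v : V, (((insert f M).filter (fun e => v ∈ e)) ∩ Y).card ≤ 1 := by
    intro v
    rw [Finset.card_le_one]
    intro a ha c hc
    simp only [Finset.mem_inter, Finset.mem_filter] at ha hc
    by_contra hne
    have hdisj := hYdisj a ha.2 c hc.2 hne
    have hvac : v ∈ a ∩ c := Finset.mem_inter.mpr ⟨ha.1.2, hc.1.2⟩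
    rw [hdisj] at hvac
    exact absurd hvac (Finset.notMem_empty v)
  have hfnm : ∀ v, v ∈ f → ((insert f M).filter (fun e => v ∈ e))
      = insert f (M.filter (fun e => v ∈ e)) := by
    intro v hv
    rw [Finset.filter_insert, if_pos hv]
  have hfnm' : ∀ v, v ∉ f → ((insert f M).filter (fun e => v ∈ e))
      = M.filter (fun e => v ∈ e) := by
    intro v hv
    rw [Finset.filter_insert, if_neg hv]
  have hItempty : ∀ v, v ∉ f → (((insert f M).filter (fun e => v ∈ e)) ∩ Y) = ∅ := by
    intro v hv
    ext x
    simp only [Finset.mem_inter, Finset.mem_filter, Finset.notMem_empty, iff_false, not_and]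
    rintro ⟨_, hvx⟩ hxY
    exact hv (hYf x hxY hvx)
  constructor
  · intro v
    by_cases hvf : v ∈ f
    · by_cases hb : ((insert f M).filter (fun e => v ∈ e)).card ≤ b v
      · rw [hcard]; omega
      · push_neg at hb
        obtain ⟨e, heY, hve⟩ := hYcov v hb
        have heIt : e ∈ ((insert f M).filter (fun e => v ∈ e)) ∩ Y :=
          Finset.mem_inter.mpr ⟨Finset.mem_filter.mpr ⟨hYN heY, hve⟩, heY⟩
        have h1 : 1 ≤ (((insert f M).filter (fun e => v ∈ e)) ∩ Y).card :=
          Finset.card_pos.mpr ⟨e, heIt⟩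
        have hF : ((insert f M).filter (fun e => v ∈ e)).card
            = (M.filter (fun e => v ∈ e)).card + 1 := by
          rw [hfnm v hvf,
            Finset.card_insert_of_notMem (fun h => hfM (Finset.mem_filter.mp h).1)]
        have := hMb v
        rw [hcard]; omega
    · have := hMb v
      rw [hcard, hfnm' v hvf]; omega
  · intro v hv
    have hsat : ((insert f M \ Y).filter (fun e => v ∈ e)).card = b v := by
      by_cases hvf : v ∈ f
      · have hF : ((insert f M).filter (fun e => v ∈ e)).card = b v + 1 := by
          rw [hfnm v hvf,
            Finset.card_insert_of_notMem (fun h => hfM (Finset.mem_filter.mp h).1), hv]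
        obtain ⟨e, heY, hve⟩ := hYcov v (by omega)
        have heIt : e ∈ ((insert f M).filter (fun e => v ∈ e)) ∩ Y :=
          Finset.mem_inter.mpr ⟨Finset.mem_filter.mpr ⟨hYN heY, hve⟩, heY⟩
        have h1 : 1 ≤ (((insert f M).filter (fun e => v ∈ e)) ∩ Y).card :=
          Finset.card_pos.mpr ⟨e, heIt⟩
        have h2 := hIt1 v
        rw [hcard]; omega
      · rw [hcard, hItempty v hvf, hfnm' v hvf]
        simp [hv]
    refine ⟨hsat, ?_⟩
    intro w1 w2 hw1 hw2
    obtain ⟨hw1mem, hvw1, -⟩ := hw1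
    obtain ⟨hw2mem, hvw2, hw2w⟩ := hw2
    have hw1N : w1 ∈ insert f M := (Finset.mem_sdiff.mp hw1mem).1
    rcases Finset.mem_insert.mp hw1N with h | h
    · subst h
      have hd := hfdom v hvw1
      push_neg at hd
      obtain ⟨e, heM, hve, hnef⟩ := hd hv
      have hne : e ≠ w1 := fun h => hfM (h ▸ heM)
      have hpfe : pref v w1 e :=
        (htotal v e (hME heM) w1 hfE hve hvw1 hne).resolve_left hnef
      rcases hw2w e heM hve with h | h
      · exact Or.inr (h ▸ hpfe)
      · exact Or.inr (htrans v hpfe h)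
    · exact hw2w w1 h hvw1
end

section
/- Let H be a subtree hypergraph with underlying tree T rooted at r, and let f be a hyperedge maximizing the distance from r to top(f), where top(f) is the vertex of f closest to r. Then every hyperedge of H that intersects f contains top(f). -/
/-!
In a tree, the vertex `t` of a subtree `S` nearest to the root `r` lies on the path from `r` to
every vertex `v` of `S`: a vertex shared by the path from `r` to `t` and the path from `t` to `v`
inside `S` would be a vertex of `S` nearer to `r`. So if `e` meets `f` in `v`, the path from `r`
to `v` runs through `top e` and then stays inside `e`; it also passes through `top f`, which is
at least as far from `r` as `top e`, hence lies on the part inside `e`.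
-/

namespace SimpleGraph

variable {V : Type*} {G : SimpleGraph V}

lemma IsAcyclic.eq_of_isPath (hG : G.IsAcyclic) {u v : V} {p q : G.Walk u v} (hp : p.IsPath)
    (hq : q.IsPath) : p = q :=
  congrArg Subtype.val ((hG.subsingleton_path u v).elim ⟨p, hp⟩ ⟨q, hq⟩)

lemma IsAcyclic.length_eq_dist_of_isPath (hG : G.IsAcyclic) {u v : V} {p : G.Walk u v}
    (hp : p.IsPath) : p.length = G.dist u v := by
  obtain ⟨q, hq, hql⟩ := p.reachable.exists_path_of_dist
  rw [← hql, hG.eq_of_isPath hp hq]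

lemma IsAcyclic.dist_lt_of_mem_support (hG : G.IsAcyclic) {u v x : V} {p : G.Walk u v}
    (hp : p.IsPath) (hx : x ∈ p.support) (hxv : x ≠ v) : G.dist u x < G.dist u v := by
  classical
  rw [← hG.length_eq_dist_of_isPath hp, ← hG.length_eq_dist_of_isPath (hp.takeUntil hx)]
  exact Walk.length_takeUntil_lt_length hx hxv

lemma exists_isPath_support_subset_of_induce_preconnected {S : Set V}
    (hS : (G.induce S).Preconnected) {a b : V} (ha : a ∈ S) (hb : b ∈ S) :
    ∃ p : G.Walk a b, p.IsPath ∧ ∀ x ∈ p.support, x ∈ S := by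
  classical
  obtain ⟨w⟩ := hS ⟨a, ha⟩ ⟨b, hb⟩
  have hwS : ∀ x ∈ (w.map (Embedding.induce S).toHom).support, x ∈ S := by
    rw [Walk.support_map]
    intro x hx
    obtain ⟨y, -, rfl⟩ := List.mem_map.mp hx
    exact y.2
  exact ⟨_, Walk.bypass_isPath _, fun x hx => hwS x (Walk.support_bypass_subset_support _ hx)⟩

lemma IsAcyclic.mem_of_mem_support_of_induce_preconnected (hG : G.IsAcyclic) {S : Set V}
    (hS : (G.induce S).Preconnected) {a b : V} (ha : a ∈ S) (hb : b ∈ S) {p : G.Walk a b}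
    (hp : p.IsPath) : ∀ x ∈ p.support, x ∈ S := by
  obtain ⟨q, hq, hqS⟩ := exists_isPath_support_subset_of_induce_preconnected hS ha hb
  rwa [hG.eq_of_isPath hp hq]

section top

variable {S : Set V} {r t v : V}

lemma IsAcyclic.isPath_append_of_forall_dist_le (hG : G.IsAcyclic)
    (hS : (G.induce S).Preconnected) (ht : t ∈ S) (hv : v ∈ S)
    (hmin : ∀ u ∈ S, G.dist r t ≤ G.dist r u) {P : G.Walk r t} {q : G.Walk t v}
    (hP : P.IsPath) (hq : q.IsPath) : (P.append q).IsPath := by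
  rw [Walk.isPath_def, Walk.support_append, List.nodup_append]
  refine ⟨hP.support_nodup, hq.support_nodup.sublist q.support.tail_sublist, ?_⟩
  rintro x hxP _ hxq rfl
  have hxt : x ≠ t := by
    rintro rfl
    have hnodup := hq.support_nodup
    rw [← Walk.cons_tail_support, List.nodup_cons] at hnodup
    exact hnodup.1 hxq
  have hxS := hG.mem_of_mem_support_of_induce_preconnected hS ht hv hq x
    (List.mem_of_mem_tail hxq)
  exact (hmin x hxS).not_gt (hG.dist_lt_of_mem_support hP hxP hxt)

lemma IsAcyclic.mem_support_of_forall_dist_le (hG : G.IsAcyclic)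
    (hS : (G.induce S).Preconnected) (ht : t ∈ S) (hv : v ∈ S)
    (hmin : ∀ u ∈ S, G.dist r t ≤ G.dist r u) {p : G.Walk r v} (hp : p.IsPath) :
    t ∈ p.support := by
  classical
  obtain ⟨q, hq, -⟩ := exists_isPath_support_subset_of_induce_preconnected hS ht hv
  have hPq := hG.isPath_append_of_forall_dist_le hS ht hv hmin
    (p.append q.reverse).bypass_isPath hq
  rw [hG.eq_of_isPath hp hPq]
  exact (Walk.mem_support_append_iff _ _).2 (Or.inr q.start_mem_support)

end top

end SimpleGraph

theorem subtree_farthest_edge_top_general {V : Type*}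
    (G : SimpleGraph V) (hT : G.IsTree)
    (E : Finset (Finset V)) (hne : ∀ e ∈ E, e.Nonempty)
    (hsub : ∀ e ∈ E, (G.induce (e : Set V)).Connected)
    (r : V)
    (f : Finset V) (hfE : f ∈ E)
    (tf : V) (htf : tf ∈ f) (htfmin : ∀ v ∈ f, G.dist r tf ≤ G.dist r v)
    (hmax : ∀ e ∈ E, ∀ te ∈ e, (∀ v ∈ e, G.dist r te ≤ G.dist r v) →
      G.dist r te ≤ G.dist r tf) :
    ∀ e ∈ E, ∀ v ∈ e, v ∈ f → tf ∈ e := by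
  intro e he v hve hvf
  obtain ⟨te, hte, htemin⟩ := e.exists_min_image (G.dist r) (hne e he)
  have he_conv := (hsub e he).preconnected
  obtain ⟨P, hP, -⟩ := (hT.connected r te).exists_path_of_dist
  obtain ⟨q, hq, -⟩ := (hT.connected te v).exists_path_of_dist
  have hPq := hT.isAcyclic.isPath_append_of_forall_dist_le he_conv hte hve htemin hP hq
  have htf_mem := hT.isAcyclic.mem_support_of_forall_dist_le (hsub f hfE).preconnected
    htf hvf htfmin hPq
  rcases (P.mem_support_append_iff q).1 htf_mem with htfP | htfq
  · by_contra htfe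
    have hlt := hT.isAcyclic.dist_lt_of_mem_support hP htfP (ne_of_mem_of_not_mem hte htfe).symm
    exact hlt.not_ge (hmax e he te hte htemin)
  · exact hT.isAcyclic.mem_of_mem_support_of_induce_preconnected he_conv hte hve hq tf htfq

/-- in a subtree hypergraph with underlying tree `G` rooted at `r`, if `f` is a
hyperedge maximizing the distance from `r` to its top vertex, then every hyperedge
intersecting `f` contains the top vertex of `f`. -/
theorem subtree_farthest_edge_top {V : Type*} [Fintype V] [DecidableEq V]
    (G : SimpleGraph V) (hT : G.IsTree)
    (E : Finset (Finset V)) (hne : ∀ e ∈ E, e.Nonempty)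
    (hsub : ∀ e ∈ E, (G.induce (e : Set V)).Connected)
    (r : V)
    (f : Finset V) (hfE : f ∈ E)
    (tf : V) (htf : tf ∈ f) (htfmin : ∀ v ∈ f, G.dist r tf ≤ G.dist r v)
    (hmax : ∀ e ∈ E, ∀ te ∈ e, (∀ v ∈ e, G.dist r te ≤ G.dist r v) →
      G.dist r te ≤ G.dist r tf) :
    ∀ e ∈ E, ∀ v ∈ e, v ∈ f → tf ∈ e :=
  subtree_farthest_edge_top_general G hT E hne hsub r f hfE tf htf htfmin hmax
end

section
/- In the Student–Project Allocation setting where each program's preference order over students coincides with that of its university, every stable assignment is a half-stable assignment of the original UDA instance; in particular, replacing each program's preferences by its university's preferences and taking a stable assignment of the modified instance yields a half-stable assignment of the original instance. -/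
open scoped Classical

/-- Students assigned by `μ` to some program of university `u` (`pu` maps programs to their
universities). -/
noncomputable def assignedU {S U P : Type*} [Fintype S] (pu : P → U)
    (μ : S → Option P) (u : U) : Finset S :=
  Finset.univ.filter (fun s => ∃ p, μ s = some p ∧ pu p = u)

/-- Students assigned by `μ` to program `p`. -/
noncomputable def assignedP {S P : Type*} [Fintype S] (μ : S → Option P) (p : P) : Finset S :=
  Finset.univ.filter (fun s => μ s = some p)

/-- The triple `(s, pu p, p)` blocks the assignment `μ`. -/
def BlocksUDA {S U P : Type*} [Fintype S] (pu : P → U) (c : U → ℕ) (q : P → ℕ)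
    (acc : S → P → Prop) (sPref : S → P → P → Prop)
    (uPref : U → S → S → Prop) (pPref : P → S → S → Prop)
    (μ : S → Option P) (s : S) (p : P) : Prop :=
  acc s p ∧ (∀ p', μ s = some p' → sPref s p p') ∧
  ((assignedU pu μ (pu p)).card < c (pu p) ∨
    (∃ s' ∈ assignedU pu μ (pu p), uPref (pu p) s s') ∨
    s ∈ assignedU pu μ (pu p)) ∧
  ((assignedP μ p).card < q p ∨ ∃ s'' ∈ assignedP μ p, pPref p s s'')

/-- The triple `(s, pu p, p)` doubly blocks `μ`. -/
def DoublyBlocksUDA {S U P : Type*} [Fintype S] (pu : P → U) (c : U → ℕ) (q : P → ℕ)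
    (acc : S → P → Prop) (sPref : S → P → P → Prop)
    (uPref : U → S → S → Prop) (pPref : P → S → S → Prop)
    (μ : S → Option P) (s : S) (p : P) : Prop :=
  BlocksUDA pu c q acc sPref uPref pPref μ s p ∧
  ((assignedP μ p).card = q p →
    ∃ s' ∈ assignedP μ p, uPref (pu p) s s' ∧ pPref p s s')

/-- if each program's preference order is replaced by the order of its
university (the Student–Project Allocation instance `I'`), then every assignment that is
stable in the modified instance is half-stable in the original UDA instance. -/
theorem spa_stable_is_halfstable
    {S U P : Type*} [Fintype S] [Fintype U] [Fintype P]
    (pu : P → U) (c : U → ℕ) (q : P → ℕ)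
    (acc : S → P → Prop) (sPref : S → P → P → Prop)
    (uPref : U → S → S → Prop) (pPref : P → S → S → Prop)
    (μ : S → Option P)
    (hacc : ∀ s p, μ s = some p → acc s p)
    (hfeasU : ∀ u, (assignedU pu μ u).card ≤ c u)
    (hfeasP : ∀ p, (assignedP μ p).card ≤ q p)
    -- μ is stable in the modified instance I', where program p's preferences are
    -- those of its university pu p:
    (hstable' : ∀ s p,
      ¬ BlocksUDA pu c q acc sPref uPref (fun p s s' => uPref (pu p) s s') μ s p) :
    ∀ s p, ¬ DoublyBlocksUDA pu c q acc sPref uPref pPref μ s p := by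
  intro s p hdb
  obtain ⟨⟨h1, h2, h3, h4⟩, h5⟩ := hdb
  apply hstable' s p
  refine ⟨h1, h2, h3, ?_⟩
  rcases lt_or_eq_of_le (hfeasP p) with hlt | heq
  · exact Or.inl hlt
  · obtain ⟨s', hs', hu, _⟩ := h5 heq
    exact Or.inr ⟨s', hs', hu⟩
end

section
/- If A is a totally unimodular matrix and b is an integral vector, then every extreme point of the polyhedron {x : Ax ≤ b, x ≥ 0} is integral. -/
/-!
Write the polyhedron as `{x | C x ≤ c}` with `C = [A; -I]` and `c = (b, 0)`; `C` is again totally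
unimodular. At an extreme point `z`, the rows of `C` that are tight at `z` have only the trivial
common null vector (otherwise `z` would be the midpoint of `z ± t d` inside the polyhedron), so
some `n` of them form a nonsingular square submatrix `B`. Being totally unimodular, `B` has
determinant `±1`, so it is invertible over `ℤ`, and `z = B⁻¹ (B z)` is integral because `B z` is
a subvector of the integral vector `c`.
-/

open Filter Topology

namespace Matrix

variable {m n : Type*}

theorem IsTotallyUnimodular.fromRows_neg_one [DecidableEq n] {R : Type*} [CommRing R]
    {A : Matrix m n R} (hA : A.IsTotallyUnimodular) :
    (fromRows A (-1 : Matrix n n R)).IsTotallyUnimodular :=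
  hA.fromRows_unitlike fun _ j =>
    ⟨j, -1, by ext k; by_cases h : j = k <;> simp [h, Pi.single_apply, eq_comm]⟩

variable [Fintype m] [Fintype n]

theorem eq_zero_of_mem_extremePoints {C : Matrix m n ℝ} {c : m → ℝ} {z d : n → ℝ}
    (hz : z ∈ {x : n → ℝ | ∀ i, (C *ᵥ x) i ≤ c i}.extremePoints ℝ)
    (hd : ∀ i, (C *ᵥ z) i = c i → (C *ᵥ d) i = 0) : d = 0 := by
  set P := {x : n → ℝ | ∀ i, (C *ᵥ x) i ≤ c i}
  have hfeas : ∀ᶠ t in 𝓝 (0 : ℝ), z + t • d ∈ P := by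
    simp only [P, Set.mem_ofPred_eq, mulVec_add, mulVec_smul, Pi.add_apply, Pi.smul_apply,
      smul_eq_mul]
    refine eventually_all.2 fun i => ?_
    rcases (hz.1 i).eq_or_lt with htight | hslack
    · exact .of_forall fun t => by simp [hd i htight, htight]
    · have hcont : Continuous fun t : ℝ => (C *ᵥ z) i + t * (C *ᵥ d) i := by fun_prop
      exact (hcont.tendsto' 0 _ (by simp)).eventually (eventually_lt_nhds hslack) |>.mono
        fun _ => le_of_lt
  have hfeas_neg : ∀ᶠ t in 𝓝 (0 : ℝ), z + (-t) • d ∈ P :=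
    (continuous_neg.tendsto' 0 0 neg_zero).eventually hfeas
  obtain ⟨t, ⟨hplus, hminus⟩, ht⟩ :=
    ((hfeas.and hfeas_neg).filter_mono nhdsWithin_le_nhds |>.and self_mem_nhdsWithin).exists
      (f := 𝓝[≠] (0 : ℝ))
  have hseg : z ∈ openSegment ℝ (z + t • d) (z + (-t) • d) :=
    ⟨1 / 2, 1 / 2, by norm_num, by norm_num, by norm_num, by module⟩
  have htd : t • d = 0 := by simpa using hz.2 hplus hminus hseg
  exact (smul_eq_zero.1 htd).resolve_left ht

theorem mulVec_submatrix_tight_injective {C : Matrix m n ℝ} {c : m → ℝ} {z : n → ℝ}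
    (hz : z ∈ {x : n → ℝ | ∀ i, (C *ᵥ x) i ≤ c i}.extremePoints ℝ) :
    Function.Injective (C.submatrix (Subtype.val : {i // (C *ᵥ z) i = c i} → m) id).mulVec := by
  intro x y hxy
  refine sub_eq_zero.1 (eq_zero_of_mem_extremePoints hz fun i hi => ?_)
  rw [mulVec_sub, Pi.sub_apply, sub_eq_zero]
  exact congrFun hxy ⟨i, hi⟩

theorem span_row_eq_top_of_mulVec_injective {K : Type*} [Field K] {D : Matrix m n K}
    (hD : Function.Injective D.mulVec) : Submodule.span K (Set.range D.row) = ⊤ := by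
  apply Submodule.eq_top_of_finrank_eq
  rw [← rank_eq_finrank_span_row, rank_eq_finrank_span_cols,
    finrank_span_eq_card (mulVec_injective_iff.1 hD), Module.finrank_fintype_fun_eq_card]

theorem exists_det_submatrix_ne_zero_of_mulVec_injective {K : Type*} [Field K] [DecidableEq n]
    {D : Matrix m n K} (hD : Function.Injective D.mulVec) :
    ∃ f : n → m, (D.submatrix f id).det ≠ 0 := by
  obtain ⟨κ, a, -, hspan, hli⟩ := exists_linearIndependent' K D.row
  rw [span_row_eq_top_of_mulVec_injective hD] at hspan
  let e : n ≃ κ := (Pi.basisFun K n).indexEquiv (Module.Basis.mk hli hspan.ge)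
  refine ⟨a ∘ e, ((isUnit_iff_isUnit_det _).1 (linearIndependent_rows_iff_isUnit.1 ?_)).ne_zero⟩
  exact hli.comp e e.injective

theorem eq_comp_inv_mulVec_of_map_mulVec [DecidableEq n] {R S : Type*} [CommRing R] [CommRing S]
    (f : R →+* S) {B : Matrix n n R} (hB : IsUnit B.det) {z : n → S} {c : n → R}
    (hz : B.map f *ᵥ z = f ∘ c) : z = f ∘ (B⁻¹ *ᵥ c) :=
  calc z = (B⁻¹ * B).map f *ᵥ z := by
        rw [nonsing_inv_mul _ hB, Matrix.map_one _ f.map_zero f.map_one, one_mulVec]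
    _ = B⁻¹.map f *ᵥ (B.map f *ᵥ z) := by rw [Matrix.map_mul, mulVec_mulVec]
    _ = f ∘ (B⁻¹ *ᵥ c) := by rw [hz]; ext i; exact (f.map_mulVec _ _ i).symm

theorem IsTotallyUnimodular.exists_map_intCast_eq_isUnit_det [DecidableEq n] {R : Type*}
    [CommRing R] [CharZero R] {B : Matrix n n R} (hB : B.IsTotallyUnimodular) (hdet : B.det ≠ 0) :
    ∃ B₀ : Matrix n n ℤ, B₀.map (↑) = B ∧ IsUnit B₀.det := by
  choose s hs using hB.apply
  let B₀ : Matrix n n ℤ := fun i j => s i j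
  have hB₀ : B₀.map (↑) = B := by ext i j; exact (SignType.intCast_cast _).trans (hs i j)
  refine ⟨B₀, hB₀, ?_⟩
  obtain ⟨t, ht⟩ := (isTotallyUnimodular_iff_fintype B).1 hB n id id
  rw [submatrix_id_id] at ht
  have hcast : ((B₀.det : ℤ) : R) = ((t : ℤ) : R) := by
    rw [SignType.intCast_cast, ht, ← hB₀, Int.cast_det]
  rw [Int.cast_injective hcast]
  cases t <;> simp_all

end Matrix

open Matrix

/-- if `A` is totally unimodular and `b` is integral, then every extreme point
of the polyhedron `{x : A x ≤ b, x ≥ 0}` is integral. -/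
theorem tu_extreme_points_integral {m n : Type*} [Fintype m] [Fintype n]
    (A : Matrix m n ℝ) (hA : A.IsTotallyUnimodular)
    (b : m → ℝ) (hb : ∀ i, ∃ k : ℤ, b i = (k : ℝ))
    (z : n → ℝ)
    (hz : z ∈ ({x : n → ℝ | (∀ i, A.mulVec x i ≤ b i) ∧ ∀ j, 0 ≤ x j}).extremePoints ℝ) :
    ∀ j, ∃ k : ℤ, z j = (k : ℝ) := by
  classical
  choose b₀ hb₀ using hb
  set C := fromRows A (-1 : Matrix n n ℝ)
  set c : m ⊕ n → ℝ := Sum.elim b 0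
  have hP : {x : n → ℝ | (∀ i, A.mulVec x i ≤ b i) ∧ ∀ j, 0 ≤ x j} =
      {x | ∀ r, (C *ᵥ x) r ≤ c r} := by
    ext x; simp [C, c, fromRows_mulVec, Sum.forall, neg_mulVec]
  rw [hP] at hz
  have hc : c = Int.cast ∘ Sum.elim b₀ 0 := by
    ext (i | j) <;> simp [c, hb₀]
  obtain ⟨f, hf⟩ := exists_det_submatrix_ne_zero_of_mulVec_injective
    (mulVec_submatrix_tight_injective hz)
  obtain ⟨B₀, hB₀, hunit⟩ := (hA.fromRows_neg_one.submatrix Subtype.val id).submatrix f id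
    |>.exists_map_intCast_eq_isUnit_det hf
  have hBz : B₀.map (Int.castRingHom ℝ) *ᵥ z =
      Int.castRingHom ℝ ∘ fun j => Sum.elim b₀ 0 (f j).1 := by
    ext j
    rw [Int.coe_castRingHom, hB₀]
    change (C *ᵥ z) (f j).1 = _
    exact (f j).2.trans (congrFun hc _)
  exact fun j => ⟨_, congrFun (eq_comp_inv_mulVec_of_map_mulVec _ hunit hBz) j⟩
end

section
/- If a 3-uniform hypergraph instance of stable hypergraph b-matching is extended by a new vertex x of capacity exceeding the number of hyperedges, with x added to every hyperedge, then the resulting hypergraph is a subtree hypergraph whose underlying tree is a star centered at x, and the stable b-matchings of the original instance correspond bijectively (by adding/removing x) to the stable b-matchings of the extended instance. -/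
/-!
The star centered at `x` is a tree, and every extended hyperedge contains its center, so it
induces a connected substar. For the correspondence, `x` lies in every hyperedge but never
reaches its capacity `|E| + 1`, so it can neither be saturated nor dominate a hyperedge: the
stability conditions of `M` and of `{e ∪ {x} : e ∈ M}` coincide at the old vertices and are
void at `x`.
-/

open scoped Classical

/-- `M` is a stable `b`-matching of the hypergraph with edge set `E`: it respects the
capacities, and every hyperedge of `E` outside `M` is dominated at some incident vertex. -/
def StableBM {α : Type*} [DecidableEq α] (E : Finset (Finset α)) (b : α → ℕ)
    (pref : α → Finset α → Finset α → Prop) (M : Finset (Finset α)) : Prop :=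
  M ⊆ E ∧ (∀ v, (M.filter (fun e => v ∈ e)).card ≤ b v) ∧
    ∀ e ∈ E, e ∉ M → ∃ v ∈ e, (M.filter (fun e' => v ∈ e')).card = b v ∧
      ∀ f ∈ M, v ∈ f → pref v f e

/-- The star graph on `Option V` centered at `none`. -/
def starGraph (V : Type*) : SimpleGraph (Option V) where
  Adj a b := (a = none ∧ b ≠ none) ∨ (b = none ∧ a ≠ none)
  symm := ⟨by intro a b h; tauto⟩
  loopless := ⟨by intro a h; tauto⟩

open Finset

lemma SimpleGraph.IsUniversal.induce {V : Type*} {G : SimpleGraph V} {v : V}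
    (h : G.IsUniversal v) {s : Set V} (hv : v ∈ s) : (G.induce s).IsUniversal ⟨v, hv⟩ :=
  fun _ hw => h (Subtype.coe_injective.ne hw)

lemma starGraph_eq_starGraph_none (V : Type*) : starGraph V = SimpleGraph.starGraph none := by
  ext a b
  simp only [starGraph, SimpleGraph.starGraph_adj]
  grind

lemma starGraph_induce_connected {V : Type*} {s : Set (Option V)} (hs : none ∈ s) :
    ((starGraph V).induce s).Connected := by
  rw [starGraph_eq_starGraph_none]
  exact .of_isUniversal (SimpleGraph.isUniversal_starGraph_self.induce hs)

lemma Finset.insertNone_eq_insert_image {α : Type*} [DecidableEq α] (s : Finset α) :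
    insertNone s = insert none (s.image some) := by
  ext (_ | a) <;> simp

section StableExtension

variable {V : Type*} [DecidableEq V] {E M : Finset (Finset V)} {b : V → ℕ} {c : ℕ}
  {pref : V → Finset V → Finset V → Prop}
  {pref' : Option V → Finset (Option V) → Finset (Option V) → Prop}

lemma card_filter_some_mem_image_insertNone (M : Finset (Finset V)) (v : V) :
    ((M.image insertNone).filter (some v ∈ ·)).card = (M.filter (v ∈ ·)).card := by
  rw [filter_image, card_image_of_injective _ insertNone.injective]
  simp only [some_mem_insertNone]

lemma card_filter_none_mem_image_insertNone_lt (hc : E.card < c) (hM : M ⊆ E) :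
    ((M.image insertNone).filter (none ∈ ·)).card < c :=
  calc _ ≤ (M.image insertNone).card := card_filter_le _ _
    _ ≤ M.card := card_image_le
    _ ≤ E.card := card_le_card hM
    _ < c := hc

lemma stableBM_image_insertNone_iff (hc : E.card < c)
    (hpref : ∀ v : V, ∀ e₁ ∈ E, ∀ e₂ ∈ E,
      (pref' (some v) (insertNone e₁) (insertNone e₂) ↔ pref v e₁ e₂))
    (hM : M ⊆ E) :
    StableBM (E.image insertNone) (fun v' => Option.elim v' c b) pref' (M.image insertNone) ↔
      StableBM E b pref M := by
  have hx := card_filter_none_mem_image_insertNone_lt hc hM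
  simp only [StableBM, image_subset_image_iff insertNone.injective, hM, true_and,
    Option.forall, Option.elim, card_filter_some_mem_image_insertNone, hx.le,
    forall_mem_image, insertNone.injective.mem_finset_image]
  refine and_congr_right fun _ => forall₂_congr fun e he => imp_congr_right fun _ => ?_
  simp only [Option.exists, hx.ne, false_and, and_false, false_or, some_mem_insertNone,
    card_filter_some_mem_image_insertNone]
  exact exists_congr fun v => and_congr_right fun _ => and_congr_right fun _ =>
    forall₂_congr fun f hf => imp_congr_right fun _ => hpref v f (hM hf) e he

noncomputable def stableBMEquivImageInsertNone (hc : E.card < c)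
    (hpref : ∀ v : V, ∀ e₁ ∈ E, ∀ e₂ ∈ E,
      (pref' (some v) (insertNone e₁) (insertNone e₂) ↔ pref v e₁ e₂)) :
    {M // StableBM E b pref M} ≃
      {M' // StableBM (E.image insertNone) (fun v' => Option.elim v' c b) pref' M'} :=
  Equiv.ofBijective
    (fun M => ⟨M.1.image insertNone, (stableBM_image_insertNone_iff hc hpref M.2.1).2 M.2⟩)
    ⟨fun _ _ h => Subtype.ext (image_injective insertNone.injective (congrArg Subtype.val h)),
     fun ⟨M', hM'⟩ => by
      obtain ⟨M, hM, rfl⟩ := subset_image_iff.mp hM'.1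
      exact ⟨⟨M, (stableBM_image_insertNone_iff hc hpref hM).1 hM'⟩, rfl⟩⟩

end StableExtension

theorem star_extension_stable_correspondence_general {V : Type*} [DecidableEq V]
    (E : Finset (Finset V))
    (b : V → ℕ)
    (pref : V → Finset V → Finset V → Prop)
    -- preferences of the extended instance: those of `some v` are induced from `pref v`,
    -- and `none` (the new vertex x) has an arbitrary strict preference `xpref`:
    (pref' : Option V → Finset (Option V) → Finset (Option V) → Prop)
    (hpref' : ∀ v : V, ∀ e1 ∈ E, ∀ e2 ∈ E,
      (pref' (some v) (insert none (e1.image some)) (insert none (e2.image some)) ↔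
        pref v e1 e2)) :
    ((starGraph V).IsTree) ∧
    (∀ e' ∈ E.image (fun e => insert (none : Option V) (e.image some)),
      ((starGraph V).induce (e' : Set (Option V))).Connected) ∧
    (∃ F : {M : Finset (Finset V) // StableBM E b pref M} ≃
        {M' : Finset (Finset (Option V)) //
          StableBM (E.image (fun e => insert (none : Option V) (e.image some)))
            (fun v' => Option.elim v' (E.card + 1) b) pref' M'},
      ∀ M, (F M).val = M.val.image (fun e => insert (none : Option V) (e.image some))) := by
  have hφ : (fun e : Finset V => insert (none : Option V) (e.image some)) = insertNone :=
    funext fun e => (insertNone_eq_insert_image e).symm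
  simp only [← insertNone_eq_insert_image] at hpref'
  rw [hφ]
  refine ⟨starGraph_eq_starGraph_none V ▸ SimpleGraph.isTree_starGraph none, ?_,
    stableBMEquivImageInsertNone (Nat.lt_succ_self _) hpref', fun _ => rfl⟩
  intro e' he'
  obtain ⟨e, -, rfl⟩ := mem_image.mp he'
  exact starGraph_induce_connected (Set.mem_insert _ _)

/-- extending a 3-uniform instance by a new vertex `x` (here `none`) of
capacity `|E| + 1` added to every hyperedge yields a subtree hypergraph whose underlying
tree is a star centered at `x`, and the stable `b`-matchings of the two instances
correspond bijectively by adding/removing `x`. -/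
theorem star_extension_stable_correspondence {V : Type*} [Fintype V] [DecidableEq V]
    (E : Finset (Finset V)) (h3 : ∀ e ∈ E, e.card = 3)
    (b : V → ℕ)
    (pref : V → Finset V → Finset V → Prop)
    -- preferences of the extended instance: those of `some v` are induced from `pref v`,
    -- and `none` (the new vertex x) has an arbitrary strict preference `xpref`:
    (pref' : Option V → Finset (Option V) → Finset (Option V) → Prop)
    (hpref' : ∀ v : V, ∀ e1 ∈ E, ∀ e2 ∈ E,
      (pref' (some v) (insert none (e1.image some)) (insert none (e2.image some)) ↔
        pref v e1 e2)) :
    ((starGraph V).IsTree) ∧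
    (∀ e' ∈ E.image (fun e => insert (none : Option V) (e.image some)),
      ((starGraph V).induce (e' : Set (Option V))).Connected) ∧
    (∃ F : {M : Finset (Finset V) // StableBM E b pref M} ≃
        {M' : Finset (Finset (Option V)) //
          StableBM (E.image (fun e => insert (none : Option V) (e.image some)))
            (fun v' => Option.elim v' (E.card + 1) b) pref' M'},
      ∀ M, (F M).val = M.val.image (fun e => insert (none : Option V) (e.image some))) :=
  star_extension_stable_correspondence_general E b pref pref' hpref'
end

section
/- In the stable marriage reduction, given a complete stable matching M of an instance of stable marriage with ties and incomplete lists (where all men have strict lists and each woman's list is either strict or a single tie of length two), the induced assignment of the constructed UDA instance with all capacities and quotas equal to 1 (one university-program pair per woman, one student per man; for tied women the university ranks the tied students one way and the program the opposite way; for strict women the university and program both inherit the woman's order) is a stable assignment of size n assigning every student. -/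
open scoped Classical

/-- University `u_i` prefers student `j` to student `j'`: for a tied woman `w_i` with tie
`{m_{tk i}, m_{tl i}}` (`tk i < tl i`) the university prefers `tk i`; for a strict woman
it inherits her order `wPref i`. -/
def uPrefRed {n : ℕ} (tied : Fin n → Prop) (tk tl : Fin n → Fin n)
    (wPref : Fin n → Fin n → Fin n → Prop) (i j j' : Fin n) : Prop :=
  (tied i ∧ j = tk i ∧ j' = tl i) ∨ (¬ tied i ∧ wPref i j j')

/-- Program `p_i` prefers student `j` to student `j'`: for a tied woman the program ranks
the two tied students oppositely to the university; for a strict woman it inherits her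
order. -/
def pPrefRed {n : ℕ} (tied : Fin n → Prop) (tk tl : Fin n → Fin n)
    (wPref : Fin n → Fin n → Fin n → Prop) (i j j' : Fin n) : Prop :=
  (tied i ∧ j = tl i ∧ j' = tk i) ∨ (¬ tied i ∧ wPref i j j')

/-- The triple `(s_j, u_i, p_i)` blocks the assignment `μ` of the constructed UDA instance
(all capacities and quotas equal to `1`). -/
def BlocksRed {n : ℕ} (Acc : Fin n → Fin n → Prop)
    (mPref : Fin n → Fin n → Fin n → Prop)
    (tied : Fin n → Prop) (tk tl : Fin n → Fin n)
    (wPref : Fin n → Fin n → Fin n → Prop)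
    (μ : Fin n → Option (Fin n)) (j i : Fin n) : Prop :=
  Acc i j ∧ (∀ i', μ j = some i' → mPref j i i') ∧
  ((Finset.univ.filter (fun j' => μ j' = some i)).card < 1 ∨
    (∃ j', μ j' = some i ∧ uPrefRed tied tk tl wPref i j j') ∨ μ j = some i) ∧
  ((Finset.univ.filter (fun j' => μ j' = some i)).card < 1 ∨
    ∃ j', μ j' = some i ∧ pPrefRed tied tk tl wPref i j j')

/-- a complete stable matching of an SMTI instance (men strict, each woman
strict or a tie of length two) induces a stable assignment of size `n` of the constructed
UDA instance with all capacities and quotas equal to `1`, assigning every student. -/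
theorem smti_complete_stable_to_uda_stable {n : ℕ}
    (Acc : Fin n → Fin n → Prop)
    (mPref : Fin n → Fin n → Fin n → Prop)
    (hmIrr : ∀ j i, ¬ mPref j i i) (hmTrans : ∀ j, Transitive (mPref j))
    (hmTotal : ∀ j i i', Acc i j → Acc i' j → i ≠ i' → mPref j i i' ∨ mPref j i' i)
    (tied : Fin n → Prop) (tk tl : Fin n → Fin n)
    (wPref : Fin n → Fin n → Fin n → Prop)
    (htie : ∀ i, tied i → tk i < tl i ∧ (∀ j, Acc i j ↔ j = tk i ∨ j = tl i) ∧
      ∀ j j', ¬ wPref i j j')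
    (hwIrr : ∀ i j, ¬ wPref i j j) (hwTrans : ∀ i, Transitive (wPref i))
    (hwTotal : ∀ i, ¬ tied i → ∀ j j', Acc i j → Acc i j' → j ≠ j' →
      wPref i j j' ∨ wPref i j' j)
    (M : Finset (Fin n × Fin n))
    (hMacc : ∀ p ∈ M, Acc p.1 p.2)
    (hMw : ∀ i, (M.filter (fun p => p.1 = i)).card ≤ 1)
    (hMm : ∀ j, (M.filter (fun p => p.2 = j)).card ≤ 1)
    -- M is complete:
    (hcomplete : (∀ i, ∃ j, (i, j) ∈ M) ∧ ∀ j, ∃ i, (i, j) ∈ M)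
    -- M is (weakly) stable:
    (hstable : ∀ i j, Acc i j → (i, j) ∉ M →
      ¬ ((∀ i', (i', j) ∈ M → mPref j i i') ∧ (∀ j', (i, j') ∈ M → wPref i j j')))
    -- μ is the induced assignment:
    (μ : Fin n → Option (Fin n)) (hμ : ∀ i j, μ j = some i ↔ (i, j) ∈ M) :
    (∀ j i, μ j = some i → Acc i j) ∧
    (∀ i, (Finset.univ.filter (fun j => μ j = some i)).card ≤ 1) ∧
    (∀ j i, ¬ BlocksRed Acc mPref tied tk tl wPref μ j i) ∧
    ((Finset.univ.filter (fun j => μ j ≠ none)).card = n) ∧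
    (∀ j, ∃ i, μ j = some i) := by
  have huniq : ∀ i j j', μ j = some i → μ j' = some i → j = j' := by
    intro i j j' hj hj'
    have h1 := (hμ i j).mp hj
    have h2 := (hμ i j').mp hj'
    have := Finset.card_le_one.mp (hMw i) (i, j)
      (Finset.mem_filter.mpr ⟨h1, rfl⟩) (i, j') (Finset.mem_filter.mpr ⟨h2, rfl⟩)
    exact congrArg Prod.snd this
  refine ⟨?_, ?_, ?_, ?_, ?_⟩
  · intro j i h; exact hMacc (i, j) ((hμ i j).mp h)
  · intro i
    apply Finset.card_le_one.mpr
    intro j hj j' hj'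
    simp only [Finset.mem_filter] at hj hj'
    exact huniq i j j' hj.2 hj'.2
  · intro j i hb
    obtain ⟨hacc, hm, hu, hp⟩ := hb
    obtain ⟨j0, hj0⟩ := hcomplete.1 i
    have hμj0 : μ j0 = some i := (hμ i j0).mpr hj0
    have hcard : ¬ (Finset.univ.filter (fun j' => μ j' = some i)).card < 1 := by
      simp only [not_lt]
      exact Finset.Nonempty.card_pos ⟨j0, Finset.mem_filter.mpr ⟨Finset.mem_univ _, hμj0⟩⟩
    rcases hu with hc | ⟨j1, hj1, hu1⟩ | hself
    · exact hcard hc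
    · rcases hp with hc | ⟨j2, hj2, hp2⟩
      · exact hcard hc
      · have hj12 : j1 = j2 := huniq i j1 j2 hj1 hj2
        subst hj12
        by_cases ht : tied i
        · rcases hu1 with ⟨_, hjk, _⟩ | ⟨hnt, _⟩
          · rcases hp2 with ⟨_, hjl, _⟩ | ⟨hnt, _⟩
            · have hlt := (htie i ht).1
              rw [← hjk, ← hjl] at hlt
              exact absurd hlt (lt_irrefl j)
            · exact hnt ht
          · exact hnt ht
        · have hw1 : wPref i j j1 := by
            rcases hu1 with ⟨ht', _⟩ | ⟨_, hw⟩
            · exact absurd ht' ht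
            · exact hw
          have hjni : (i, j) ∉ M := by
            intro hmem
            have heq := huniq i j j1 ((hμ i j).mpr hmem) hj1
            subst heq
            exact hwIrr i j hw1
          apply hstable i j hacc hjni
          refine ⟨fun i' hi' => hm i' ((hμ i' j).mpr hi'), fun j' hj' => ?_⟩
          have heq : j' = j1 := huniq i j' j1 ((hμ i j').mpr hj') hj1
          rw [heq]; exact hw1
    · exact hmIrr j i (hm i hself)
  · have hall : ∀ j : Fin n, μ j ≠ none := by
      intro j
      obtain ⟨i, hi⟩ := hcomplete.2 j
      simp [(hμ i j).mpr hi]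
    rw [Finset.filter_true_of_mem (fun j _ => hall j)]
    simp
  · intro j
    obtain ⟨i, hi⟩ := hcomplete.2 j
    exact ⟨i, (hμ i j).mpr hi⟩
end

section
/- Conversely, in the same stable marriage reduction, a stable assignment of size n of the constructed UDA instance (all capacities 1) induces, via matching woman w_i to man m_j whenever student s_j is assigned to program p_i, a complete stable matching of the original SMTI instance. -/
open scoped Classical

/-- a stable assignment of size `n` of the constructed UDA instance (all
capacities `1`) induces, by matching woman `w_i` to man `m_j` whenever student `s_j` is
assigned to program `p_i`, a complete (weakly) stable matching of the SMTI instance. -/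
theorem uda_stable_to_smti_complete_stable {n : ℕ}
    (Acc : Fin n → Fin n → Prop)
    (mPref : Fin n → Fin n → Fin n → Prop)
    (hmIrr : ∀ j i, ¬ mPref j i i) (hmTrans : ∀ j, Transitive (mPref j))
    (hmTotal : ∀ j i i', Acc i j → Acc i' j → i ≠ i' → mPref j i i' ∨ mPref j i' i)
    (tied : Fin n → Prop) (tk tl : Fin n → Fin n)
    (wPref : Fin n → Fin n → Fin n → Prop)
    (htie : ∀ i, tied i → tk i < tl i ∧ (∀ j, Acc i j ↔ j = tk i ∨ j = tl i) ∧
      ∀ j j', ¬ wPref i j j')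
    (hwIrr : ∀ i j, ¬ wPref i j j) (hwTrans : ∀ i, Transitive (wPref i))
    (hwTotal : ∀ i, ¬ tied i → ∀ j j', Acc i j → Acc i j' → j ≠ j' →
      wPref i j j' ∨ wPref i j' j)
    (μ : Fin n → Option (Fin n))
    (hμacc : ∀ j i, μ j = some i → Acc i j)
    (hμfeas : ∀ i, (Finset.univ.filter (fun j => μ j = some i)).card ≤ 1)
    -- μ is stable:
    (hμstable : ∀ j i, ¬ BlocksRed Acc mPref tied tk tl wPref μ j i)
    -- μ has size n:
    (hsize : (Finset.univ.filter (fun j => μ j ≠ none)).card = n) :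
    (∀ p ∈ Finset.univ.filter (fun p : Fin n × Fin n => μ p.2 = some p.1), Acc p.1 p.2) ∧
    (∀ i, ((Finset.univ.filter (fun p : Fin n × Fin n => μ p.2 = some p.1)).filter
        (fun p => p.1 = i)).card ≤ 1) ∧
    (∀ j, ((Finset.univ.filter (fun p : Fin n × Fin n => μ p.2 = some p.1)).filter
        (fun p => p.2 = j)).card ≤ 1) ∧
    (∀ i, ∃ j, (i, j) ∈ Finset.univ.filter (fun p : Fin n × Fin n => μ p.2 = some p.1)) ∧
    (∀ j, ∃ i, (i, j) ∈ Finset.univ.filter (fun p : Fin n × Fin n => μ p.2 = some p.1)) ∧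
    (∀ i j, Acc i j → (i, j) ∉ Finset.univ.filter (fun p : Fin n × Fin n => μ p.2 = some p.1) →
      ¬ ((∀ i', (i', j) ∈ Finset.univ.filter (fun p : Fin n × Fin n => μ p.2 = some p.1) →
            mPref j i i') ∧
         (∀ j', (i, j') ∈ Finset.univ.filter (fun p : Fin n × Fin n => μ p.2 = some p.1) →
            wPref i j j'))) := by
  classical
  have hall : ∀ j, ∃ i, μ j = some i := by
    intro j
    have hfe : (Finset.univ.filter (fun j => μ j ≠ none)) = Finset.univ := by
      apply Finset.eq_univ_of_card
      simpa using hsize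
    have hj : j ∈ Finset.univ.filter (fun j => μ j ≠ none) := by rw [hfe]; exact Finset.mem_univ j
    have := (Finset.mem_filter.mp hj).2
    exact Option.ne_none_iff_exists'.mp this
  choose f hf using hall
  have hinj : Function.Injective f := by
    intro a b hab
    have h1 := hμfeas (f a)
    have ha : a ∈ Finset.univ.filter (fun j => μ j = some (f a)) := by
      simp [hf]
    have hb : b ∈ Finset.univ.filter (fun j => μ j = some (f a)) := by
      simp [hf, hab]
    exact Finset.card_le_one.mp h1 a ha b hb
  have hsurj : Function.Surjective f := Finite.surjective_of_injective hinj
  refine ⟨?_, ?_, ?_, ?_, ?_, ?_⟩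
  · intro p hp
    exact hμacc p.2 p.1 (Finset.mem_filter.mp hp).2
  · intro i
    apply Finset.card_le_one.mpr
    intro p hp q hq
    simp only [Finset.mem_filter, Finset.mem_univ, true_and] at hp hq
    have hp2 : f p.2 = i := by
      have := hf p.2; rw [hp.1] at this
      exact (Option.some_inj.mp this.symm).trans hp.2
    have hq2 : f q.2 = i := by
      have := hf q.2; rw [hq.1] at this
      exact (Option.some_inj.mp this.symm).trans hq.2
    have h2 : p.2 = q.2 := hinj (hp2.trans hq2.symm)
    exact Prod.ext (hp.2.trans hq.2.symm) h2
  · intro j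
    apply Finset.card_le_one.mpr
    intro p hp q hq
    simp only [Finset.mem_filter, Finset.mem_univ, true_and] at hp hq
    have h1 : p.1 = q.1 := by
      have hpp := hp.1; have hqq := hq.1
      rw [hp.2] at hpp; rw [hq.2] at hqq
      exact Option.some_inj.mp (hpp.symm.trans hqq)
    exact Prod.ext h1 (hp.2.trans hq.2.symm)
  · intro i
    obtain ⟨j, hj⟩ := hsurj i
    exact ⟨j, by simp [hj ▸ hf j]⟩
  · intro j
    exact ⟨f j, by simp [hf j]⟩
  · rintro i j hacc hnot ⟨h1, h2⟩
    obtain ⟨j', hj'⟩ := hsurj i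
    have hμj' : μ j' = some i := hj' ▸ hf j'
    have hmem : (i, j') ∈ Finset.univ.filter (fun p : Fin n × Fin n => μ p.2 = some p.1) := by
      simp [hμj']
    have hw : wPref i j j' := h2 j' hmem
    by_cases ht : tied i
    · exact (htie i ht).2.2 j j' hw
    · apply hμstable j i
      refine ⟨hacc, ?_, ?_, ?_⟩
      · intro i' hi'
        exact h1 i' (by simp [hi'])
      · exact Or.inr (Or.inl ⟨j', hμj', Or.inr ⟨ht, hw⟩⟩)
      · exact Or.inr ⟨j', hμj', Or.inr ⟨ht, hw⟩⟩
end

section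
/- Consider a UDA instance and its IP formulation: binary variables x_e for acceptable triples e = (s, u, p) subject to (1) Σ_{e ∋ s} x_e ≤ 1 for each student s, (2) Σ_{e ∋ u} x_e ≤ c(u) for each university u, (3) Σ_{e ∋ p} x_e ≤ 1 for each program p (all quotas 1), and (4) for every triple e = (s, u, p): c(u)·(Σ_{e' ≻_s e} x_{e'} + Σ_{e' ≻_p e} x_{e'} + x_e) + Σ_{e' ≻_u e} x_{e'} ≥ c(u), where the sums are over hyperedges preferred to e by s, p, u respectively in the associated hypergraph preferences. Then the 0-1 solutions of this system are exactly the characteristic vectors of stable b-matchings of the associated hypergraph instance. -/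
open scoped Classical

/-- the 0–1 solutions of the UDA integer program are exactly the
characteristic vectors of the stable `b`-matchings of the associated hypergraph instance
(all program quotas equal to `1`).  Hyperedges (acceptable triples `{s, u(p), p}`) are
encoded as pairs `(s, p)` with `acc s p`. -/
theorem uda_ip_characterizes_stable_bmatchings
    {S U P : Type*} [Fintype S] [Fintype U] [Fintype P]
    [DecidableEq S] [DecidableEq U] [DecidableEq P]
    (pu : P → U) (c : U → ℕ)
    (acc : S → P → Prop)
    (sPref : S → P → P → Prop) (uPref : U → S → S → Prop) (pPref : P → S → S → Prop)
    (x : {e : S × P // acc e.1 e.2} → ℤ)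
    (h01 : ∀ e, x e = 0 ∨ x e = 1) :
    -- the IP constraints:
    ((∀ s : S, ∑ e ∈ Finset.univ.filter (fun e : {e : S × P // acc e.1 e.2} => e.1.1 = s),
        x e ≤ 1) ∧
     (∀ u : U, ∑ e ∈ Finset.univ.filter
        (fun e : {e : S × P // acc e.1 e.2} => pu e.1.2 = u), x e ≤ (c u : ℤ)) ∧
     (∀ p : P, ∑ e ∈ Finset.univ.filter (fun e : {e : S × P // acc e.1 e.2} => e.1.2 = p),
        x e ≤ 1) ∧
     (∀ e : {e : S × P // acc e.1 e.2},
       (c (pu e.1.2) : ℤ) *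
         ((∑ e' ∈ Finset.univ.filter (fun e' : {e : S × P // acc e.1 e.2} =>
              e'.1.1 = e.1.1 ∧ sPref e.1.1 e'.1.2 e.1.2), x e') +
          (∑ e' ∈ Finset.univ.filter (fun e' : {e : S × P // acc e.1 e.2} =>
              e'.1.2 = e.1.2 ∧ pPref e.1.2 e'.1.1 e.1.1), x e') +
          x e) +
         (∑ e' ∈ Finset.univ.filter (fun e' : {e : S × P // acc e.1 e.2} =>
              pu e'.1.2 = pu e.1.2 ∧
              (uPref (pu e.1.2) e'.1.1 e.1.1 ∨
                (e'.1.1 = e.1.1 ∧ sPref e.1.1 e'.1.2 e.1.2))), x e')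
         ≥ (c (pu e.1.2) : ℤ)))
    ↔
    -- x is the characteristic vector of a stable b-matching M = {e : x e = 1}:
    (let M := Finset.univ.filter (fun e : {e : S × P // acc e.1 e.2} => x e = 1)
     (∀ s : S, (M.filter (fun e => e.1.1 = s)).card ≤ 1) ∧
     (∀ u : U, (M.filter (fun e => pu e.1.2 = u)).card ≤ c u) ∧
     (∀ p : P, (M.filter (fun e => e.1.2 = p)).card ≤ 1) ∧
     (∀ e : {e : S × P // acc e.1 e.2}, e ∉ M →
       (((M.filter (fun e' => e'.1.1 = e.1.1)).card = 1 ∧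
           ∀ e' ∈ M, e'.1.1 = e.1.1 → sPref e.1.1 e'.1.2 e.1.2) ∨
        ((M.filter (fun e' => pu e'.1.2 = pu e.1.2)).card = c (pu e.1.2) ∧
           ∀ e' ∈ M, pu e'.1.2 = pu e.1.2 →
             (uPref (pu e.1.2) e'.1.1 e.1.1 ∨
               (e'.1.1 = e.1.1 ∧ sPref e.1.1 e'.1.2 e.1.2))) ∨
        ((M.filter (fun e' => e'.1.2 = e.1.2)).card = 1 ∧
           ∀ e' ∈ M, e'.1.2 = e.1.2 → pPref e.1.2 e'.1.1 e.1.1)))) := by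

  classical
  set M := Finset.univ.filter (fun e : {e : S × P // acc e.1 e.2} => x e = 1) with hM
  have hmem : ∀ e, e ∈ M ↔ x e = 1 := by intro e; simp [hM]
  have key : ∀ (q : {e : S × P // acc e.1 e.2} → Prop) [DecidablePred q],
      ∑ e ∈ Finset.univ.filter q, x e = ((M.filter q).card : ℤ) := by
    intro q _
    rw [hM, Finset.filter_comm, Finset.card_filter]
    push_cast
    refine Finset.sum_congr rfl fun e _ => ?_
    rcases h01 e with h | h <;> simp [h]
  constructor
  · rintro ⟨h1, h2, h3, h4⟩
    refine ⟨?_, ?_, ?_, ?_⟩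
    · intro s; have := h1 s; rw [key] at this; exact_mod_cast this
    · intro u; have := h2 u; rw [key] at this; exact_mod_cast this
    · intro p; have := h3 p; rw [key] at this; exact_mod_cast this
    · intro e heM
      have hx0 : x e = 0 := by
        rcases h01 e with h | h
        · exact h
        · exact absurd ((hmem e).mpr h) heM
      have h4e := h4 e
      rw [key, key, key, hx0] at h4e
      -- card facts in ℕ
      have hs1 : (M.filter (fun e' => e'.1.1 = e.1.1)).card ≤ 1 := by
        have := h1 e.1.1; rw [key] at this; exact_mod_cast this
      have hp1 : (M.filter (fun e' => e'.1.2 = e.1.2)).card ≤ 1 := by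
        have := h3 e.1.2; rw [key] at this; exact_mod_cast this
      have hu1 : (M.filter (fun e' => pu e'.1.2 = pu e.1.2)).card ≤ c (pu e.1.2) := by
        have := h2 (pu e.1.2); rw [key] at this; exact_mod_cast this
      by_cases hA : (M.filter (fun e' : {e : S × P // acc e.1 e.2} =>
          e'.1.1 = e.1.1 ∧ sPref e.1.1 e'.1.2 e.1.2)).Nonempty
      · left
        obtain ⟨e', he'⟩ := hA
        rw [Finset.mem_filter] at he'
        have he'M : e' ∈ M := he'.1
        have he's : e'.1.1 = e.1.1 := he'.2.1
        have he'mem : e' ∈ M.filter (fun e' => e'.1.1 = e.1.1) :=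
          Finset.mem_filter.mpr ⟨he'M, he's⟩
        have hcard : (M.filter (fun e' => e'.1.1 = e.1.1)).card = 1 :=
          le_antisymm hs1 (Finset.card_pos.mpr ⟨e', he'mem⟩)
        refine ⟨hcard, fun e'' he''M he''s => ?_⟩
        have : e'' = e' := Finset.card_le_one.mp hs1 _
          (Finset.mem_filter.mpr ⟨he''M, he''s⟩) _ he'mem
        rw [this]; exact he'.2.2
      · by_cases hB : (M.filter (fun e' : {e : S × P // acc e.1 e.2} =>
            e'.1.2 = e.1.2 ∧ pPref e.1.2 e'.1.1 e.1.1)).Nonempty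
        · right; right
          obtain ⟨e', he'⟩ := hB
          rw [Finset.mem_filter] at he'
          have he'mem : e' ∈ M.filter (fun e' => e'.1.2 = e.1.2) :=
            Finset.mem_filter.mpr ⟨he'.1, he'.2.1⟩
          have hcard : (M.filter (fun e' => e'.1.2 = e.1.2)).card = 1 :=
            le_antisymm hp1 (Finset.card_pos.mpr ⟨e', he'mem⟩)
          refine ⟨hcard, fun e'' he''M he''p => ?_⟩
          have : e'' = e' := Finset.card_le_one.mp hp1 _
            (Finset.mem_filter.mpr ⟨he''M, he''p⟩) _ he'mem
          rw [this]; exact he'.2.2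
        · right; left
          rw [Finset.not_nonempty_iff_eq_empty] at hA hB
          rw [hA, hB] at h4e
          simp only [Finset.card_empty, Nat.cast_zero, add_zero, mul_zero, zero_add] at h4e
          -- h4e : (C : ℤ) ≥ c
          set G := M.filter (fun e' : {e : S × P // acc e.1 e.2} =>
              pu e'.1.2 = pu e.1.2 ∧
              (uPref (pu e.1.2) e'.1.1 e.1.1 ∨
                (e'.1.1 = e.1.1 ∧ sPref e.1.1 e'.1.2 e.1.2))) with hG
          set F := M.filter (fun e' => pu e'.1.2 = pu e.1.2) with hF
          have hGF : G ⊆ F := by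
            intro a ha
            rw [hG, Finset.mem_filter] at ha
            exact Finset.mem_filter.mpr ⟨ha.1, ha.2.1⟩
          have hCc : c (pu e.1.2) ≤ G.card := by exact_mod_cast h4e
          have hFc : F.card = c (pu e.1.2) :=
            le_antisymm hu1 (le_trans hCc (Finset.card_le_card hGF))
          have hFG : F = G := (Finset.eq_of_subset_of_card_le hGF
            (by omega)).symm
          refine ⟨hFc, fun e' he'M he'u => ?_⟩
          have : e' ∈ F := Finset.mem_filter.mpr ⟨he'M, he'u⟩
          rw [hFG, hG, Finset.mem_filter] at this
          exact this.2.2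
  · rintro ⟨h1, h2, h3, h4⟩
    refine ⟨?_, ?_, ?_, ?_⟩
    · intro s; rw [key]; exact_mod_cast h1 s
    · intro u; rw [key]; exact_mod_cast h2 u
    · intro p; rw [key]; exact_mod_cast h3 p
    · intro e
      rw [key, key, key]
      set A := (M.filter (fun e' : {e : S × P // acc e.1 e.2} =>
          e'.1.1 = e.1.1 ∧ sPref e.1.1 e'.1.2 e.1.2)).card with hA
      set B := (M.filter (fun e' : {e : S × P // acc e.1 e.2} =>
          e'.1.2 = e.1.2 ∧ pPref e.1.2 e'.1.1 e.1.1)).card with hB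
      set C := (M.filter (fun e' : {e : S × P // acc e.1 e.2} =>
          pu e'.1.2 = pu e.1.2 ∧
          (uPref (pu e.1.2) e'.1.1 e.1.1 ∨
            (e'.1.1 = e.1.1 ∧ sPref e.1.1 e'.1.2 e.1.2)))).card with hC
      have hc0 : (0:ℤ) ≤ (c (pu e.1.2) : ℤ) := Nat.cast_nonneg _
      have hA0 : (0:ℤ) ≤ (A:ℤ) := Nat.cast_nonneg _
      have hB0 : (0:ℤ) ≤ (B:ℤ) := Nat.cast_nonneg _
      have hC0 : (0:ℤ) ≤ (C:ℤ) := Nat.cast_nonneg _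
      by_cases heM : e ∈ M
      · have hx1 : x e = 1 := (hmem e).mp heM
        rw [hx1]
        nlinarith
      · have hx0 : x e = 0 := by
          rcases h01 e with h | h
          · exact h
          · exact absurd ((hmem e).mpr h) heM
        rw [hx0]
        rcases h4 e heM with ⟨hc, hall⟩ | ⟨hc, hall⟩ | ⟨hc, hall⟩
        · have hAeq : A = 1 := by
            rw [hA]
            rw [show (M.filter (fun e' : {e : S × P // acc e.1 e.2} =>
                e'.1.1 = e.1.1 ∧ sPref e.1.1 e'.1.2 e.1.2)) =
              M.filter (fun e' => e'.1.1 = e.1.1) from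
              Finset.filter_congr fun e' he' =>
                ⟨fun h => h.1, fun h => ⟨h, hall e' he' h⟩⟩]
            exact hc
          rw [hAeq]
          push_cast
          nlinarith
        · have hCeq : C = c (pu e.1.2) := by
            rw [hC]
            rw [show (M.filter (fun e' : {e : S × P // acc e.1 e.2} =>
                pu e'.1.2 = pu e.1.2 ∧
                (uPref (pu e.1.2) e'.1.1 e.1.1 ∨
                  (e'.1.1 = e.1.1 ∧ sPref e.1.1 e'.1.2 e.1.2)))) =
              M.filter (fun e' => pu e'.1.2 = pu e.1.2) from
              Finset.filter_congr fun e' he' =>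
                ⟨fun h => h.1, fun h => ⟨h, hall e' he' h⟩⟩]
            exact hc
          rw [hCeq]
          nlinarith
        · have hBeq : B = 1 := by
            rw [hB]
            rw [show (M.filter (fun e' : {e : S × P // acc e.1 e.2} =>
                e'.1.2 = e.1.2 ∧ pPref e.1.2 e'.1.1 e.1.1)) =
              M.filter (fun e' => e'.1.2 = e.1.2) from
              Finset.filter_congr fun e' he' =>
                ⟨fun h => h.1, fun h => ⟨h, hall e' he' h⟩⟩]
            exact hc
          rw [hBeq]
          push_cast
          nlinarith
end
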